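/- arXiv:math/0406022 — 2 statements merged into one kernel-verified Lean document; each statement's English description precedes it below -/
import Mathlib

section
/- Let H(z,w) be twice continuously differentiable near (z*,w*) with H(z*,w*)=0, and suppose H = χ·Q near (z*,w*) where χ(z*,w*) ≠ 0 and Q(z,w) = (1 − w·v_0(z))(1 − w·v_1(z)) with v_j analytic, v_j(z*) = 1/w*. Write v_j(z* e^{iθ}) = v_j(z*)(1 + i c_j θ + O(θ²)). Then at (z*,w*) = (1,1): H_ww = 2χ, H_wz = χ(c_0 + c_1), H_zz = 2χ c_0 c_1, so c_0 and c_1 are the two roots of the quadratic H_ww x² − 2H_wz x + H_zz = 0, and |c_0 − c_1| = 2√(−det Hess(H))/H_ww where det Hess = H_zz H_ww − H_wz². -/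
/-- The derivative of a real-analytic function is differentiable at the point. -/
lemma aux_derivDiff (a : ℝ → ℝ) (ha : AnalyticAt ℝ a 1) :
    DifferentiableAt ℝ (deriv a) 1 := by
  have h1 : DifferentiableAt ℝ (fun x => fderiv ℝ a x 1) 1 :=
    (ha.fderiv.differentiableAt).clm_apply (differentiableAt_const _)
  have h2 : deriv a = fun x => fderiv ℝ a x 1 := funext fun x => (fderiv_apply_one_eq_deriv).symm
  rw [h2]; exact h1

/-- Second derivative at 1 of a product `a·f·g` where `f 1 = g 1 = 0`. -/
lemma aux_second_deriv (a f g : ℝ → ℝ) (ha : AnalyticAt ℝ a 1) (hf : AnalyticAt ℝ f 1)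
    (hg : AnalyticAt ℝ g 1) (hf0 : f 1 = 0) (hg0 : g 1 = 0) :
    deriv (deriv (fun x => a x * f x * g x)) 1 = 2 * a 1 * deriv f 1 * deriv g 1 := by
  have hev : ∀ᶠ x in nhds (1:ℝ), deriv (fun x => a x * f x * g x) x
      = (deriv a x * f x + a x * deriv f x) * g x + a x * f x * deriv g x := by
    filter_upwards [ha.eventually_analyticAt, hf.eventually_analyticAt,
      hg.eventually_analyticAt] with x hax hfx hgx
    exact ((hax.differentiableAt.hasDerivAt.mul hfx.differentiableAt.hasDerivAt).mul
      hgx.differentiableAt.hasDerivAt).deriv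
  rw [Filter.EventuallyEq.deriv_eq hev]
  have Ha := ha.differentiableAt.hasDerivAt
  have Hf := hf.differentiableAt.hasDerivAt
  have Hg := hg.differentiableAt.hasDerivAt
  have Hda := (aux_derivDiff a ha).hasDerivAt
  have Hdf := (aux_derivDiff f hf).hasDerivAt
  have Hdg := (aux_derivDiff g hg).hasDerivAt
  have key := (((Hda.mul Hf).add (Ha.mul Hdf)).mul Hg).add ((Ha.mul Hf).mul Hdg)
  refine key.deriv.trans ?_
  simp only [Pi.mul_apply, Pi.add_apply, hf0, hg0]
  ring

/-- First derivative at 1 of the mixed expression. -/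
lemma aux_mixed (A b v0 v1 : ℝ → ℝ) (hA : DifferentiableAt ℝ A 1)
    (hb : DifferentiableAt ℝ b 1) (hv0 : DifferentiableAt ℝ v0 1)
    (hv1 : DifferentiableAt ℝ v1 1) (hv01 : v0 1 = 1) (hv11 : v1 1 = 1) :
    deriv (fun z => A z * ((1 - v0 z) * (1 - v1 z))
        + b z * (-(v0 z) * (1 - v1 z) + (1 - v0 z) * -(v1 z))) 1
      = b 1 * (deriv v0 1 + deriv v1 1) := by
  have HA := hA.hasDerivAt
  have Hb := hb.hasDerivAt
  have Hv0 := hv0.hasDerivAt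
  have Hv1 := hv1.hasDerivAt
  have H0 : HasDerivAt (fun z => 1 - v0 z) (-(deriv v0 1)) 1 := Hv0.const_sub 1
  have H1 : HasDerivAt (fun z => 1 - v1 z) (-(deriv v1 1)) 1 := Hv1.const_sub 1
  have Hn0 : HasDerivAt (fun z => -(v0 z)) (-(deriv v0 1)) 1 := Hv0.neg
  have Hn1 : HasDerivAt (fun z => -(v1 z)) (-(deriv v1 1)) 1 := Hv1.neg
  have key := (HA.mul (H0.mul H1)).add (Hb.mul ((Hn0.mul H1).add (H0.mul Hn1)))
  refine key.deriv.trans ?_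
  simp only [Pi.mul_apply, Pi.add_apply, hv01, hv11]
  ring

/-- Local analysis at a double point `(1,1)`: if `H = χ·(1 − w v₀(z))(1 − w v₁(z))`
near `(1,1)` with `χ` analytic and positive at `(1,1)`, `v₀, v₁` analytic with
`v₀(1) = v₁(1) = 1`, and `c_j := v_j'(1)`, then at `(1,1)`:
`H_ww = 2χ`, `H_wz = χ(c₀+c₁)`, `H_zz = 2χ c₀ c₁`; hence `c₀` and `c₁` are the
roots of `H_ww x² − 2 H_wz x + H_zz = 0` and
`|c₀ − c₁| = 2√(−det Hess H)/H_ww` where `det Hess = H_zz H_ww − H_wz²`. -/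
theorem stmt7 (H χ : ℝ → ℝ → ℝ) (v0 v1 : ℝ → ℝ)
    (hH2 : ContDiffAt ℝ 2 (fun p : ℝ × ℝ => H p.1 p.2) (1, 1))
    (hH0 : H 1 1 = 0)
    (hχ : AnalyticAt ℝ (fun p : ℝ × ℝ => χ p.1 p.2) (1, 1))
    (hχpos : 0 < χ 1 1)
    (hv0 : AnalyticAt ℝ v0 1) (hv1 : AnalyticAt ℝ v1 1)
    (hv01 : v0 1 = 1) (hv11 : v1 1 = 1)
    (hfac : ∀ᶠ p : ℝ × ℝ in nhds (1, 1),
      H p.1 p.2 = χ p.1 p.2 * (1 - p.2 * v0 p.1) * (1 - p.2 * v1 p.1)) :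
    ∀ c0 c1 Hzz Hwz Hww : ℝ,
      c0 = deriv v0 1 → c1 = deriv v1 1 →
      Hzz = iteratedDeriv 2 (fun z => H z 1) 1 →
      Hwz = deriv (fun z => deriv (fun w => H z w) 1) 1 →
      Hww = iteratedDeriv 2 (fun w => H 1 w) 1 →
      Hww = 2 * χ 1 1 ∧
      Hwz = χ 1 1 * (c0 + c1) ∧
      Hzz = 2 * χ 1 1 * c0 * c1 ∧
      Hww * c0 ^ 2 - 2 * Hwz * c0 + Hzz = 0 ∧
      Hww * c1 ^ 2 - 2 * Hwz * c1 + Hzz = 0 ∧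
      |c0 - c1| = 2 * Real.sqrt (-(Hzz * Hww - Hwz ^ 2)) / Hww := by
  set χp : ℝ × ℝ → ℝ := fun p => χ p.1 p.2 with hχp
  -- line maps
  have tw : Filter.Tendsto (fun w : ℝ => ((1:ℝ), w)) (nhds 1) (nhds ((1:ℝ), (1:ℝ))) :=
    (continuous_const.prodMk continuous_id).tendsto 1
  have tz : Filter.Tendsto (fun z : ℝ => (z, (1:ℝ))) (nhds 1) (nhds ((1:ℝ), (1:ℝ))) :=
    (continuous_id.prodMk continuous_const).tendsto 1
  -- analyticity of restricted χ
  have hχw : AnalyticAt ℝ (fun w => χ 1 w) 1 := by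
    exact hχ.comp₂ (f := fun _ : ℝ => (1:ℝ)) (g := fun w : ℝ => w) analyticAt_const analyticAt_id
  have hχz : AnalyticAt ℝ (fun z => χ z 1) 1 := by
    exact hχ.comp₂ (f := fun z : ℝ => z) (g := fun _ : ℝ => (1:ℝ)) analyticAt_id analyticAt_const
  have it2 : ∀ f : ℝ → ℝ, iteratedDeriv 2 f = deriv (deriv f) := by
    intro f
    rw [show (2:ℕ) = 1 + 1 from rfl, iteratedDeriv_succ, iteratedDeriv_one]
  -- ww computation
  have eww : iteratedDeriv 2 (fun w => H 1 w) 1 = 2 * χ 1 1 := by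
    have hev : (fun w => H 1 w) =ᶠ[nhds (1:ℝ)]
        (fun w => χ 1 w * (1 - w * v0 1) * (1 - w * v1 1)) := tw.eventually hfac
    have hf : AnalyticAt ℝ (fun w : ℝ => 1 - w * v0 1) 1 :=
      analyticAt_const.sub (analyticAt_id.mul analyticAt_const)
    have hg : AnalyticAt ℝ (fun w : ℝ => 1 - w * v1 1) 1 :=
      analyticAt_const.sub (analyticAt_id.mul analyticAt_const)
    have df : deriv (fun w : ℝ => 1 - w * v0 1) 1 = -(1 * v0 1) :=
      (((hasDerivAt_id (1:ℝ)).mul_const (v0 1)).const_sub 1).deriv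
    have dg : deriv (fun w : ℝ => 1 - w * v1 1) 1 = -(1 * v1 1) :=
      (((hasDerivAt_id (1:ℝ)).mul_const (v1 1)).const_sub 1).deriv
    rw [it2, (hev.deriv).deriv_eq,
      aux_second_deriv _ _ _ hχw hf hg (by simp [hv01]) (by simp [hv11]), df, dg, hv01, hv11]
    ring
  -- zz computation
  have ezz : iteratedDeriv 2 (fun z => H z 1) 1 = 2 * χ 1 1 * deriv v0 1 * deriv v1 1 := by
    have hev : (fun z => H z 1) =ᶠ[nhds (1:ℝ)]
        (fun z => χ z 1 * (1 - 1 * v0 z) * (1 - 1 * v1 z)) := tz.eventually hfac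
    have hf : AnalyticAt ℝ (fun z : ℝ => 1 - 1 * v0 z) 1 :=
      analyticAt_const.sub (analyticAt_const.mul hv0)
    have hg : AnalyticAt ℝ (fun z : ℝ => 1 - 1 * v1 z) 1 :=
      analyticAt_const.sub (analyticAt_const.mul hv1)
    have df : deriv (fun z : ℝ => 1 - 1 * v0 z) 1 = -(1 * deriv v0 1) :=
      ((hv0.differentiableAt.hasDerivAt.const_mul 1).const_sub 1).deriv
    have dg : deriv (fun z : ℝ => 1 - 1 * v1 z) 1 = -(1 * deriv v1 1) :=
      ((hv1.differentiableAt.hasDerivAt.const_mul 1).const_sub 1).deriv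
    rw [it2, (hev.deriv).deriv_eq,
      aux_second_deriv _ _ _ hχz hf hg (by simp [hv01]) (by simp [hv11]), df, dg]
    ring
  -- mixed computation
  have ewz : deriv (fun z => deriv (fun w => H z w) 1) 1
      = χ 1 1 * (deriv v0 1 + deriv v1 1) := by
    have hcur : ∀ᶠ z in nhds (1:ℝ), ∀ᶠ w in nhds (1:ℝ),
        H z w = χ z w * (1 - w * v0 z) * (1 - w * v1 z) := by
      have h := hfac
      rw [nhds_prod_eq] at h
      exact h.curry
    have hχev : ∀ᶠ z in nhds (1:ℝ), AnalyticAt ℝ χp (z, 1) :=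
      tz.eventually hχ.eventually_analyticAt
    -- the explicit formula for the inner derivative
    have hEeq : ∀ᶠ z in nhds (1:ℝ), deriv (fun w => H z w) 1
        = (fun z => deriv (fun w => χ z w) 1) z * ((1 - v0 z) * (1 - v1 z))
          + (fun z => χ z 1) z * (-(v0 z) * (1 - v1 z) + (1 - v0 z) * -(v1 z)) := by
      filter_upwards [hcur, hχev] with z hz1 hz2
      have hχzw : DifferentiableAt ℝ (fun w => χ z w) 1 := by
        exact (hz2.comp₂ (f := fun _ : ℝ => z) (g := fun w : ℝ => w)
          analyticAt_const analyticAt_id).differentiableAt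
      have Hw0 : HasDerivAt (fun w : ℝ => 1 - w * v0 z) (-(1 * v0 z)) 1 :=
        ((hasDerivAt_id (1:ℝ)).mul_const (v0 z)).const_sub 1
      have Hw1 : HasDerivAt (fun w : ℝ => 1 - w * v1 z) (-(1 * v1 z)) 1 :=
        ((hasDerivAt_id (1:ℝ)).mul_const (v1 z)).const_sub 1
      have Hprod := (hχzw.hasDerivAt.mul Hw0).mul Hw1
      rw [Filter.EventuallyEq.deriv_eq hz1]
      refine Hprod.deriv.trans ?_
      simp only [Pi.mul_apply]
      ring
    have hA : DifferentiableAt ℝ (fun z => deriv (fun w => χ z w) 1) 1 := by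
      have hB : DifferentiableAt ℝ (fun z => (fderiv ℝ χp (z, 1)) ((0:ℝ), (1:ℝ))) 1 := by
        have h1 : DifferentiableAt ℝ (fun z : ℝ => fderiv ℝ χp (z, 1)) 1 := by
          exact DifferentiableAt.comp (g := fderiv ℝ χp) (f := fun z : ℝ => (z, (1:ℝ))) 1
            hχ.fderiv.differentiableAt
            (differentiableAt_id.prodMk (differentiableAt_const (1:ℝ)))
        exact h1.clm_apply (differentiableAt_const _)
      have heq : (fun z => deriv (fun w => χ z w) 1)
          =ᶠ[nhds (1:ℝ)] (fun z => (fderiv ℝ χp (z, 1)) ((0:ℝ), (1:ℝ))) := by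
        filter_upwards [hχev] with z hz2
        have hline : HasDerivAt (fun w : ℝ => ((z, w) : ℝ × ℝ)) ((0:ℝ), (1:ℝ)) 1 :=
          (hasDerivAt_const (1:ℝ) z).prodMk (hasDerivAt_id 1)
        exact (hz2.differentiableAt.hasFDerivAt.comp_hasDerivAt 1 hline).deriv
      exact hB.congr_of_eventuallyEq heq
    rw [Filter.EventuallyEq.deriv_eq hEeq]
    exact aux_mixed _ _ _ _ hA hχz.differentiableAt hv0.differentiableAt
      hv1.differentiableAt hv01 hv11
  -- assemble
  intro c0 c1 Hzz Hwz Hww hc0 hc1 hz hw hww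
  subst hc0 hc1 hz hw hww
  set K := χ 1 1 with hK
  set d0 := deriv v0 1
  set d1 := deriv v1 1
  rw [eww, ewz, ezz]
  refine ⟨rfl, rfl, rfl, by ring, by ring, ?_⟩
  have h1 : -(2 * K * d0 * d1 * (2 * K) - (K * (d0 + d1)) ^ 2) = (K * |d0 - d1|) ^ 2 := by
    rw [mul_pow K |d0 - d1|, sq_abs]; ring
  rw [h1, Real.sqrt_sq (by positivity)]
  field_simp
end

section
/- Let C be an (n+1)×(d+1) real matrix whose columns are linearly independent, let δ ∈ ℝ^{d+1} be in the row space, let A = {α ∈ ℝ^{n+1} : α C = δ} (an affine subspace of dimension n−d), let A_0 be its translate through the origin, and assume the last column of C is the all-ones vector 1. Let A^⊥ be the orthogonal complement of A_0 within the hyperplane V = 1^⊥ ⊂ ℝ^{n+1}. Then the orthogonal projection of the column space of C onto A^⊥ has dimension d. -/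
/-!
`A₀ = {α : αC = 0}` is the orthogonal complement of the column space `W` of `C`, so
`A^⊥ = 1^⊥ ∩ W`. Since `1 ∈ W` is a column, `A^⊥` is a hyperplane of the `(d+1)`-dimensional
space `W`; and since `A^⊥ ⊆ W`, projecting `W` onto `A^⊥` is surjective.
-/

namespace Submodule

variable {𝕜 E : Type*} [RCLike 𝕜] [NormedAddCommGroup E] [InnerProductSpace 𝕜 E]

theorem map_orthogonalProjectionOnto_eq_top_of_le {K W : Submodule 𝕜 E}
    [K.HasOrthogonalProjection] (h : K ≤ W) :
    W.map K.orthogonalProjectionOnto.toLinearMap = ⊤ :=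
  eq_top_iff.2 fun y _ => ⟨y, h y.2, K.orthogonalProjectionOnto_mem_subspace_eq_self y⟩

theorem finrank_inf_orthogonal_span_singleton_add_one [FiniteDimensional 𝕜 E]
    {W : Submodule 𝕜 E} {e : E} (he : e ∈ W) (he0 : e ≠ 0) :
    Module.finrank 𝕜 (W ⊓ (𝕜 ∙ e)ᗮ : Submodule 𝕜 E) + 1 = Module.finrank 𝕜 W := by
  rw [inf_comm, ← finrank_span_singleton (K := 𝕜) he0, add_comm]
  exact finrank_add_inf_finrank_orthogonal ((span_singleton_le_iff_mem e W).2 he)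

end Submodule

namespace EuclideanSpace

variable {m ι : Type*} [Fintype m]

theorem ker_vecMulLinear_eq_orthogonal_span_cols (C : Matrix m ι ℝ) :
    LinearMap.ker ((Matrix.vecMulLinear C).comp (WithLp.linearEquiv 2 ℝ (m → ℝ)).toLinearMap) =
      (Submodule.span ℝ (Set.range fun j : ι =>
        ((WithLp.linearEquiv 2 ℝ (m → ℝ)).symm (fun i => C i j) : EuclideanSpace ℝ m)))ᗮ := by
  ext x
  rw [LinearMap.mem_ker, ← Submodule.span_singleton_le_iff_mem, ← Submodule.isOrtho_iff_le,
    Submodule.isOrtho_span, funext_iff]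
  simp [PiLp.inner_apply, Matrix.vecMul, dotProduct, mul_comm, WithLp.linearEquiv]

theorem ker_sum_proj_eq_orthogonal_ones :
    LinearMap.ker ((∑ i : m, LinearMap.proj i : (m → ℝ) →ₗ[ℝ] ℝ).comp
        (WithLp.linearEquiv 2 ℝ (m → ℝ)).toLinearMap) =
      (ℝ ∙ ((WithLp.linearEquiv 2 ℝ (m → ℝ)).symm (fun _ => 1) : EuclideanSpace ℝ m))ᗮ := by
  ext x
  rw [Submodule.mem_orthogonal_singleton_iff_inner_right]
  simp [PiLp.inner_apply, WithLp.linearEquiv]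

end EuclideanSpace

theorem stmt11_general (n d : ℕ) (C : Matrix (Fin (n + 1)) (Fin (d + 1)) ℝ)
    (hcols : LinearIndependent ℝ
      (fun j : Fin (d + 1) =>
        ((WithLp.linearEquiv 2 ℝ (Fin (n + 1) → ℝ)).symm (fun i => C i j) :
          EuclideanSpace ℝ (Fin (n + 1)))))
    (hlast : ∀ i, C i (Fin.last d) = 1)
    (A0 V1 Aperp : Submodule ℝ (EuclideanSpace ℝ (Fin (n + 1))))
    (hA0 : A0 = LinearMap.ker ((Matrix.vecMulLinear C).comp
      (WithLp.linearEquiv 2 ℝ (Fin (n + 1) → ℝ)).toLinearMap))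
    (hV1 : V1 = LinearMap.ker
      ((∑ i : Fin (n + 1), LinearMap.proj i : ((Fin (n + 1)) → ℝ) →ₗ[ℝ] ℝ).comp
        (WithLp.linearEquiv 2 ℝ (Fin (n + 1) → ℝ)).toLinearMap))
    (hAperp : Aperp = V1 ⊓ A0ᗮ) :
    Module.finrank ℝ
      ((Submodule.span ℝ (Set.range fun j : Fin (d + 1) =>
          ((WithLp.linearEquiv 2 ℝ (Fin (n + 1) → ℝ)).symm (fun i => C i j) :
            EuclideanSpace ℝ (Fin (n + 1))))).map
        (Submodule.orthogonalProjectionOnto Aperp).toLinearMap) = d := by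
  set W := Submodule.span ℝ (Set.range fun j : Fin (d + 1) =>
    ((WithLp.linearEquiv 2 ℝ (Fin (n + 1) → ℝ)).symm (fun i => C i j) :
      EuclideanSpace ℝ (Fin (n + 1))))
  set e : EuclideanSpace ℝ (Fin (n + 1)) := (WithLp.linearEquiv 2 ℝ (Fin (n + 1) → ℝ)).symm 1
  have heW : e ∈ W := by
    have hcol : (WithLp.linearEquiv 2 ℝ (Fin (n + 1) → ℝ)).symm (fun i => C i (Fin.last d)) = e :=
      congrArg _ (funext hlast)
    exact hcol ▸ Submodule.subset_span (Set.mem_range_self _)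
  have he0 : e ≠ 0 := fun h => one_ne_zero (congrFun (congrArg WithLp.ofLp h) 0)
  have hAperp_eq : Aperp = W ⊓ (ℝ ∙ e)ᗮ := by
    rw [hAperp, hV1, hA0, EuclideanSpace.ker_sum_proj_eq_orthogonal_ones,
      EuclideanSpace.ker_vecMulLinear_eq_orthogonal_span_cols, Submodule.orthogonal_orthogonal,
      inf_comm]
    rfl
  have hW : Module.finrank ℝ W = d + 1 := by
    rw [finrank_span_eq_card hcols, Fintype.card_fin]
  rw [Submodule.map_orthogonalProjectionOnto_eq_top_of_le (hAperp_eq ▸ inf_le_left), finrank_top,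
    hAperp_eq]
  exact Nat.succ_injective
    ((Submodule.finrank_inf_orthogonal_span_singleton_add_one heW he0).trans hW)

/-- Proposition "perp dim": let `C` be an `(n+1)×(d+1)` real matrix with
linearly independent columns whose last column is the all-ones vector, let `δ`
lie in the row space of `C`, let `A₀ = {α : αC = 0}` (the translate through the
origin of `A = {α : αC = δ}`), and let `A^⊥` be the orthogonal complement of
`A₀` inside the hyperplane `V = 1^⊥`. Then the orthogonal projection of the
column space of `C` onto `A^⊥` has dimension `d`. -/
theorem stmt11 (n d : ℕ) (C : Matrix (Fin (n + 1)) (Fin (d + 1)) ℝ)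
    (hcols : LinearIndependent ℝ
      (fun j : Fin (d + 1) =>
        ((WithLp.linearEquiv 2 ℝ (Fin (n + 1) → ℝ)).symm (fun i => C i j) :
          EuclideanSpace ℝ (Fin (n + 1)))))
    (hlast : ∀ i, C i (Fin.last d) = 1)
    (δ : Fin (d + 1) → ℝ)
    (hδ : δ ∈ Submodule.span ℝ (Set.range fun i => C i))
    (A0 V1 Aperp : Submodule ℝ (EuclideanSpace ℝ (Fin (n + 1))))
    (hA0 : A0 = LinearMap.ker ((Matrix.vecMulLinear C).comp
      (WithLp.linearEquiv 2 ℝ (Fin (n + 1) → ℝ)).toLinearMap))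
    (hV1 : V1 = LinearMap.ker
      ((∑ i : Fin (n + 1), LinearMap.proj i : ((Fin (n + 1)) → ℝ) →ₗ[ℝ] ℝ).comp
        (WithLp.linearEquiv 2 ℝ (Fin (n + 1) → ℝ)).toLinearMap))
    (hAperp : Aperp = V1 ⊓ A0ᗮ) :
    Module.finrank ℝ
      ((Submodule.span ℝ (Set.range fun j : Fin (d + 1) =>
          ((WithLp.linearEquiv 2 ℝ (Fin (n + 1) → ℝ)).symm (fun i => C i j) :
            EuclideanSpace ℝ (Fin (n + 1))))).map
        (Submodule.orthogonalProjectionOnto Aperp).toLinearMap) = d :=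
  stmt11_general n d C hcols hlast A0 V1 Aperp hA0 hV1 hAperp
end
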